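/- (Lemma 1(i) via value iteration.) For every n ≥ 0, the value-iteration function V_n is nondecreasing in the age coordinate: for all integers Δ₁, Δ₂ with 1 ≤ Δ₁ ≤ Δ₂ and every Λ ∈ {0,…,M}, V_n(Δ₁, Λ) ≤ V_n(Δ₂, Λ). -/

import Mathlib

/-! Induction on `n`. Both action costs grow with the age `Δ` once the next-stage values do, and
since `D` is nondecreasing the transmit action is available at an older age only if it is
available at a younger one, so the Bellman update preserves monotonicity in `Δ`. -/

/-- Value-iteration functions for the discounted age-plus-energy MDP with
age-dependent distortion requirement. `VI M P p α β D n Δ Λ` is `V_n(Δ, Λ)`. -/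
noncomputable def VI (M : ℕ) (P : ℕ → ℝ) (p α β : ℝ) (D : ℕ → ℕ) :
    ℕ → ℕ → ℕ → ℝ
  | 0 => fun _ _ => 0
  | n + 1 => fun Δ Λ =>
      let En : ℕ → ℝ := fun d => ∑ l ∈ Finset.range (M + 1), P l * VI M P p α β D n d l
      let Q0 : ℝ := (Δ : ℝ) + α * En (Δ + 1)
      let Q1 : ℝ := (Δ : ℝ) + β + α * (p * En (Δ + 1) + (1 - p) * En 1)
      if D Δ ≤ Λ then min Q0 Q1 else Q0

/-- `E d` plays the role of the expected next-stage value `E_n(d)`. -/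
def bellmanUpdate (p α β : ℝ) (D : ℕ → ℕ) (E : ℕ → ℝ) (Δ Λ : ℕ) : ℝ :=
  if D Δ ≤ Λ then min (Δ + α * E (Δ + 1)) (Δ + β + α * (p * E (Δ + 1) + (1 - p) * E 1))
  else Δ + α * E (Δ + 1)

theorem VI_succ (M : ℕ) (P : ℕ → ℝ) (p α β : ℝ) (D : ℕ → ℕ) (n : ℕ) :
    VI M P p α β D (n + 1) =
      bellmanUpdate p α β D (fun d => ∑ l ∈ Finset.range (M + 1), P l * VI M P p α β D n d l) :=
  rfl

theorem ite_min_le_ite_min {c₁ c₂ : Prop} [Decidable c₁] [Decidable c₂] {a₁ a₂ b₁ b₂ : ℝ}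
    (hc : c₂ → c₁) (ha : a₁ ≤ a₂) (hb : b₁ ≤ b₂) :
    (if c₁ then min a₁ b₁ else a₁) ≤ (if c₂ then min a₂ b₂ else a₂) := by
  by_cases h₂ : c₂
  · simp only [hc h₂, h₂, if_true]
    exact min_le_min ha hb
  · rw [if_neg h₂]
    split_ifs
    exacts [(min_le_left _ _).trans ha, ha]

theorem monotone_bellmanUpdate {p α β : ℝ} {D : ℕ → ℕ} {E : ℕ → ℝ}
    (hp : 0 ≤ p) (hα : 0 ≤ α) (hD : Monotone D) (hE : Monotone E) (Λ : ℕ) :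
    Monotone fun Δ => bellmanUpdate p α β D E Δ Λ := by
  intro Δ₁ Δ₂ h
  have hΔ : (Δ₁ : ℝ) ≤ Δ₂ := Nat.cast_le.mpr h
  have hE' : E (Δ₁ + 1) ≤ E (Δ₂ + 1) := hE (Nat.succ_le_succ h)
  exact ite_min_le_ite_min (hD h).trans (by gcongr) (by gcongr)

theorem monotone_sum_mul_of_nonneg {M : ℕ} {P : ℕ → ℝ} {f : ℕ → ℕ → ℝ}
    (hP : ∀ l, 0 ≤ P l) (hf : ∀ l, Monotone fun d => f d l) :
    Monotone fun d => ∑ l ∈ Finset.range M, P l * f d l :=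
  fun _ _ h => Finset.sum_le_sum fun l _ => mul_le_mul_of_nonneg_left (hf l h) (hP l)

theorem VI_monotone (M : ℕ) {P : ℕ → ℝ} {p α : ℝ} (β : ℝ) {D : ℕ → ℕ}
    (hP : ∀ l, 0 ≤ P l) (hp : 0 ≤ p) (hα : 0 ≤ α) (hD : Monotone D) (n Λ : ℕ) :
    Monotone fun Δ => VI M P p α β D n Δ Λ := by
  induction n generalizing Λ with
  | zero => exact monotone_const
  | succ n ih =>
    rw [VI_succ]
    exact monotone_bellmanUpdate hp hα hD (monotone_sum_mul_of_nonneg hP ih) Λ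

theorem VI_monotone_in_age (M : ℕ) (P : ℕ → ℝ) (p α β : ℝ) (D : ℕ → ℕ)
    (hP : ∀ l, 0 ≤ P l)
    (hp0 : 0 ≤ p) (hα0 : 0 < α)
    (hD : Monotone D) :
    ∀ n : ℕ, ∀ Δ₁ Δ₂ Λ : ℕ, 1 ≤ Δ₁ → Δ₁ ≤ Δ₂ → Λ ≤ M →
      VI M P p α β D n Δ₁ Λ ≤ VI M P p α β D n Δ₂ Λ :=
  fun n _ _ Λ _ h _ => VI_monotone M β hP hp0 hα0.le hD n Λ h
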